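/- Let m ≥ 2, n ≥ 1, let A be a real m×m symmetric matrix with a_{ij} ≥ 0 for i ≠ j, zero row sums, and irreducible; let ε > 0, c > 0, and let λ₁ < 0 be the largest eigenvalue of the pinned matrix Ã (ã_{11} = a_{11} − ε, ã_{ij} = a_{ij} otherwise). Let g : ℝ → ℝ satisfy (g(u) − g(v))(u − v) ≥ α(u − v)² for all u, v ∈ ℝ, with a constant α > 0, and write g(x) for componentwise application of g to x ∈ ℝⁿ. Suppose f : ℝⁿ × [0,∞) → ℝⁿ satisfies condition (11) with positive diagonal matrices P = diag(p₁,…,p_n), Δ = diag(Δ₁,…,Δ_n) and constant η > 0, and that Δ_k + αcλ₁ < 0 for every k = 1,…,n. Let s : [0,∞) → ℝⁿ satisfy s'(t) = f(s(t),t), and let x₁,…,x_m : [0,∞) → ℝⁿ satisfy the nonlinearly coupled controlled network x₁'(t) = f(x₁(t),t) + c·Σ_{j=1}^m a_{1j} g(x_j(t)) − cε(g(x₁(t)) − g(s(t))) and x_i'(t) = f(x_i(t),t) + c·Σ_{j=1}^m a_{ij} g(x_j(t)) for i = 2,…,m. Then for all t ≥ 0, Σ_{i=1}^m (x_i(t)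 − s(t))ᵀ P (x_i(t) − s(t)) ≤ e^{−(2η/max_k p_k)·t} · Σ_{i=1}^m (x_i(0) − s(0))ᵀ P (x_i(0) − s(0)); in particular every x_i converges to s exponentially. -/

import Mathlib

/-!
Write `eᵢ = xᵢ - s`. Because `A` has zero row sums, the errors obey
`eᵢ' = f(xᵢ) - f(s) + c ∑ⱼ ãᵢⱼ (g(xⱼ) - g(s))`. In each state coordinate split
`g(xⱼ) - g(s) = α eⱼ + zⱼ`, where `(eᵢ - eⱼ)(zᵢ - zⱼ) ≥ 0` for all nodes and `e₁ z₁ ≥ 0`. The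
`α e` part of the coupling is at most `α λ₁ |e|²` (Rayleigh quotient of the symmetric `Ã`); the
`z` part is nonpositive, because `eᵀ A z = -½ ∑ᵢⱼ aᵢⱼ (eᵢ - eⱼ)(zᵢ - zⱼ)` and the pinning adds
`-ε e₁ z₁`. With condition (11) and `Δₖ + α c λ₁ < 0`, the Lyapunov function `V = ∑ᵢ eᵢᵀ P eᵢ`
then satisfies `V' ≤ -(2η / max pₖ) V`, and Grönwall's inequality gives the bound.
-/

open Matrix

namespace Matrix

variable {ι : Type*} [Fintype ι]

theorem IsSymm.dotProduct_mulVec_eq_neg_half_sum {A : Matrix ι ι ℝ} (hA : A.IsSymm)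
    (hrow : ∀ i, ∑ j, A i j = 0) (e z : ι → ℝ) :
    e ⬝ᵥ A *ᵥ z = -(1 / 2) * ∑ i, ∑ j, A i j * ((e i - e j) * (z i - z j)) := by
  have hrowsum : ∀ i, ∑ j, A i j * (e i * (z i - z j)) = -(e i * (A *ᵥ z) i) := by
    intro i
    have h : ∑ j, A i j * (e i * (z i - z j)) = e i * z i * ∑ j, A i j - e i * (A *ᵥ z) i := by
      simp only [mulVec, dotProduct, Finset.mul_sum, ← Finset.sum_sub_distrib]
      exact Finset.sum_congr rfl fun j _ => by ring
    rw [h, hrow, mul_zero, zero_sub]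
  have hswap : ∑ i, ∑ j, A i j * (e j * (z i - z j))
      = -∑ i, ∑ j, A i j * (e i * (z i - z j)) := by
    rw [Finset.sum_comm, ← Finset.sum_neg_distrib]
    refine Finset.sum_congr rfl fun i _ => ?_
    rw [← Finset.sum_neg_distrib]
    refine Finset.sum_congr rfl fun j _ => ?_
    rw [hA.apply i j]
    ring
  have hsplit : ∑ i, ∑ j, A i j * ((e i - e j) * (z i - z j))
      = ∑ i, ∑ j, A i j * (e i * (z i - z j)) - ∑ i, ∑ j, A i j * (e j * (z i - z j)) := by
    simp only [← Finset.sum_sub_distrib]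
    exact Finset.sum_congr rfl fun i _ => Finset.sum_congr rfl fun j _ => by ring
  rw [hsplit, hswap, Finset.sum_congr rfl fun i _ => hrowsum i, Finset.sum_neg_distrib]
  simp only [dotProduct]
  ring

theorem IsSymm.dotProduct_mulVec_nonpos {A : Matrix ι ι ℝ} (hA : A.IsSymm)
    (hoff : ∀ i j, i ≠ j → 0 ≤ A i j) (hrow : ∀ i, ∑ j, A i j = 0) {e z : ι → ℝ}
    (hez : ∀ i j, 0 ≤ (e i - e j) * (z i - z j)) :
    e ⬝ᵥ A *ᵥ z ≤ 0 := by
  rw [hA.dotProduct_mulVec_eq_neg_half_sum hrow]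
  have : 0 ≤ ∑ i, ∑ j, A i j * ((e i - e j) * (z i - z j)) := by
    refine Finset.sum_nonneg fun i _ => Finset.sum_nonneg fun j _ => ?_
    rcases eq_or_ne i j with rfl | hij
    · simp
    · exact mul_nonneg (hoff i j hij) (hez i j)
  linarith

theorem IsHermitian.dotProduct_mulVec_le_of_spectrum_le [DecidableEq ι] {M : Matrix ι ι ℝ}
    (hM : M.IsHermitian) {lam : ℝ} (hlam : ∀ μ ∈ spectrum ℝ M, μ ≤ lam) (e : ι → ℝ) :
    e ⬝ᵥ M *ᵥ e ≤ lam * (e ⬝ᵥ e) := by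
  have hB : (algebraMap ℝ _ lam - M).IsHermitian := by
    rw [algebraMap_eq_diagonal]
    exact (isHermitian_diagonal _).sub hM
  have hpsd : (algebraMap ℝ _ lam - M).PosSemidef := by
    refine hB.posSemidef_iff_eigenvalues_nonneg.mpr fun i => ?_
    have hmem := hB.eigenvalues_mem_spectrum_real i
    rw [← spectrum.singleton_sub_eq] at hmem
    obtain ⟨_, rfl, μ, hμ, hi⟩ := hmem
    rw [← hi]
    exact sub_nonneg.mpr (hlam μ hμ)
  have := hpsd.dotProduct_mulVec_nonneg e
  rwa [star_trivial, sub_mulVec, dotProduct_sub, sub_nonneg, Algebra.algebraMap_eq_smul_one,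
    smul_mulVec, one_mulVec, dotProduct_smul, smul_eq_mul] at this

theorem dotProduct_single_mulVec [DecidableEq ι] (i j : ι) (a : ℝ) (e z : ι → ℝ) :
    e ⬝ᵥ single i j a *ᵥ z = a * e i * z j := by
  rw [single_mulVec_eq, dotProduct_smul, dotProduct_single, smul_eq_mul]
  ring

theorem sum_sub_single_smul_sub {κ : Type*} [DecidableEq ι] {A : Matrix ι ι ℝ}
    (hrow : ∀ i, ∑ j, A i j = 0) (i0 : ι) (ε : ℝ) (G : ι → κ → ℝ) (H : κ → ℝ) (i : ι) :
    ∑ j, (A - single i0 i0 ε) i j • (G j - H)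
      = ∑ j, A i j • G j - if i = i0 then ε • (G i0 - H) else 0 := by
  have hH : ∑ j, A i j • H = 0 := by rw [← Finset.sum_smul, hrow, zero_smul]
  rcases eq_or_ne i i0 with rfl | hi
  · simp [sub_smul, smul_sub, Finset.sum_sub_distrib, hH, single_apply]
    abel
  · simp [hi, Ne.symm hi, smul_sub, Finset.sum_sub_distrib, hH]

end Matrix

theorem pinned_dotProduct_mulVec_le {ι : Type*} [Fintype ι] [DecidableEq ι]
    {A : Matrix ι ι ℝ} (hA : A.IsSymm) (hoff : ∀ i j, i ≠ j → 0 ≤ A i j)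
    (hrow : ∀ i, ∑ j, A i j = 0) {ε : ℝ} (hε : 0 ≤ ε) (i0 : ι) {lam : ℝ}
    (hlam : ∀ μ, Module.End.HasEigenvalue (A - single i0 i0 ε).mulVecLin μ → μ ≤ lam)
    {g : ℝ → ℝ} {α : ℝ} (hα : 0 ≤ α) (hg : ∀ u v, α * (u - v) ^ 2 ≤ (g u - g v) * (u - v))
    (u : ι → ℝ) (v : ℝ) :
    (fun i => u i - v) ⬝ᵥ (A - single i0 i0 ε) *ᵥ (fun i => g (u i) - g v)
      ≤ α * lam * ((fun i => u i - v) ⬝ᵥ (fun i => u i - v)) := by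
  set e : ι → ℝ := fun i => u i - v
  set z : ι → ℝ := fun i => g (u i) - g v - α * (u i - v)
  have hsymm : (A - single i0 i0 ε).IsSymm := hA.sub (transpose_single i0 i0 ε)
  have hspec : ∀ μ ∈ spectrum ℝ (A - single i0 i0 ε), μ ≤ lam := fun μ hμ =>
    hlam μ (Module.End.hasEigenvalue_iff_mem_spectrum.mpr (by rwa [← spectrum_toLin'] at hμ))
  have hquad := (isHermitian_iff_isSymm.mpr hsymm).dotProduct_mulVec_le_of_spectrum_le hspec e
  have hmono : ∀ i j, 0 ≤ (e i - e j) * (z i - z j) := fun i j => by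
    have := hg (u i) (u j)
    simp only [e, z]
    linarith
  have hpin : 0 ≤ e i0 * z i0 := by
    have := hg (u i0) v
    simp only [e, z]
    linarith
  have hz : e ⬝ᵥ (A - single i0 i0 ε) *ᵥ z ≤ 0 := by
    rw [sub_mulVec, dotProduct_sub, dotProduct_single_mulVec, mul_assoc]
    have := hA.dotProduct_mulVec_nonpos hoff hrow hmono
    nlinarith [mul_nonneg hε hpin]
  have hy : (fun i => g (u i) - g v) = α • e + z := by
    ext i
    simp only [Pi.add_apply, Pi.smul_apply, smul_eq_mul, e, z]
    ring
  rw [hy, mulVec_add, dotProduct_add, mulVec_smul, dotProduct_smul, smul_eq_mul]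
  nlinarith [mul_le_mul_of_nonneg_left hquad hα]

theorem sum_dotProduct_pinned_coupling_le {ι κ : Type*} [Fintype ι] [DecidableEq ι] [Fintype κ]
    {A : Matrix ι ι ℝ} (hA : A.IsSymm) (hoff : ∀ i j, i ≠ j → 0 ≤ A i j)
    (hrow : ∀ i, ∑ j, A i j = 0) {ε : ℝ} (hε : 0 ≤ ε) (i0 : ι) {lam : ℝ}
    (hlam : ∀ μ, Module.End.HasEigenvalue (A - single i0 i0 ε).mulVecLin μ → μ ≤ lam)
    {g : ℝ → ℝ} {α : ℝ} (hα : 0 ≤ α) (hg : ∀ u v, α * (u - v) ^ 2 ≤ (g u - g v) * (u - v))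
    {p : κ → ℝ} (hp : ∀ k, 0 ≤ p k) (X : ι → κ → ℝ) (S : κ → ℝ) :
    ∑ i, (X i - S) ⬝ᵥ (fun k => p k *
        (∑ j, (A - single i0 i0 ε) i j • ((fun k => g (X j k)) - fun k => g (S k))) k)
      ≤ α * lam * ∑ i, (X i - S) ⬝ᵥ (fun k => p k * (X i - S) k) := by
  have hcol := fun k => pinned_dotProduct_mulVec_le hA hoff hrow hε i0 hlam hα hg
    (fun i => X i k) (S k)
  calc ∑ i, (X i - S) ⬝ᵥ (fun k => p k *
        (∑ j, (A - single i0 i0 ε) i j • ((fun k => g (X j k)) - fun k => g (S k))) k)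
      = ∑ k, p k * ((fun i => X i k - S k) ⬝ᵥ
          (A - single i0 i0 ε) *ᵥ (fun i => g (X i k) - g (S k))) := by
        simp only [dotProduct, mulVec, Finset.sum_apply, Pi.smul_apply, Pi.sub_apply, smul_eq_mul,
          Finset.mul_sum]
        rw [Finset.sum_comm]
        exact Finset.sum_congr rfl fun k _ => Finset.sum_congr rfl fun i _ =>
          Finset.sum_congr rfl fun j _ => by ring
    _ ≤ ∑ k, p k * (α * lam * ((fun i => X i k - S k) ⬝ᵥ (fun i => X i k - S k))) :=
        Finset.sum_le_sum fun k _ => mul_le_mul_of_nonneg_left (hcol k) (hp k)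
    _ = α * lam * ∑ i, (X i - S) ⬝ᵥ (fun k => p k * (X i - S) k) := by
        simp only [dotProduct, Pi.sub_apply, Finset.mul_sum]
        rw [Finset.sum_comm]
        exact Finset.sum_congr rfl fun k _ => Finset.sum_congr rfl fun i _ => by ring

theorem hasDerivAt_sub_of_pinned_network {ι κ : Type*} [Fintype ι] [DecidableEq ι] [Fintype κ]
    {A : Matrix ι ι ℝ} (hrow : ∀ i, ∑ j, A i j = 0) (i0 : ι) {ε c : ℝ} {g : ℝ → ℝ}
    {F : (κ → ℝ) → κ → ℝ} {x : ι → ℝ → κ → ℝ} {s : ℝ → κ → ℝ} {τ : ℝ}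
    (hs : HasDerivAt s (F (s τ)) τ)
    (hx0 : HasDerivAt (x i0) (F (x i0 τ) + c • (∑ j, A i0 j • fun k => g (x j τ k))
      - (c * ε) • ((fun k => g (x i0 τ k)) - fun k => g (s τ k))) τ)
    (hx : ∀ i ≠ i0, HasDerivAt (x i) (F (x i τ) + c • ∑ j, A i j • fun k => g (x j τ k)) τ)
    (i : ι) :
    HasDerivAt (fun t => x i t - s t) (F (x i τ) - F (s τ)
      + c • ∑ j, (A - single i0 i0 ε) i j • ((fun k => g (x j τ k)) - fun k => g (s τ k))) τ := by
  rw [sum_sub_single_smul_sub hrow]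
  rcases eq_or_ne i i0 with rfl | hi
  · refine (hx0.sub hs).congr_deriv ?_
    simp [smul_sub, mul_smul]
    abel
  · refine ((hx i hi).sub hs).congr_deriv ?_
    simp [hi]
    abel

theorem hasDerivAt_sum_dotProduct_weighted {ι κ : Type*} [Fintype ι] [Fintype κ] (p : κ → ℝ)
    {e : ι → ℝ → κ → ℝ} {e' : ι → κ → ℝ} {τ : ℝ} (he : ∀ i, HasDerivAt (e i) (e' i) τ) :
    HasDerivAt (fun t => ∑ i, e i t ⬝ᵥ (fun k => p k * e i t k))
      (2 * ∑ i, e i τ ⬝ᵥ (fun k => p k * e' i k)) τ := by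
  simp only [dotProduct, Finset.mul_sum]
  refine HasDerivAt.fun_sum fun i _ => HasDerivAt.fun_sum fun k _ => ?_
  have h := hasDerivAt_pi.mp (he i) k
  exact (h.fun_mul (h.const_mul (p k))).congr_deriv (by ring)

theorem sum_dotProduct_weighted_drift_le {ι κ : Type*} [Fintype ι] [Fintype κ]
    {F : (κ → ℝ) → κ → ℝ} {p Δ : κ → ℝ} {η : ℝ}
    (hF : ∀ x y : κ → ℝ, (x - y) ⬝ᵥ (fun k => p k * (F x k - Δ k * x k - F y k + Δ k * y k))
      ≤ -η * ((x - y) ⬝ᵥ (x - y)))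
    (hη : 0 ≤ η) (hp : ∀ k, 0 < p k) {pmax : ℝ} (hpmax : ∀ k, p k ≤ pmax)
    {c β : ℝ} (hc : 0 ≤ c) (hβ : ∀ k, Δ k + c * β ≤ 0) (X : ι → κ → ℝ) (S : κ → ℝ)
    (C : ι → κ → ℝ)
    (hC : ∑ i, (X i - S) ⬝ᵥ (fun k => p k * C i k)
      ≤ β * ∑ i, (X i - S) ⬝ᵥ (fun k => p k * (X i - S) k)) :
    ∑ i, (X i - S) ⬝ᵥ (fun k => p k * (F (X i) - F S + c • C i) k)
      ≤ -(η / pmax) * ∑ i, (X i - S) ⬝ᵥ (fun k => p k * (X i - S) k) := by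
  have hdiss : ∀ i, (X i - S) ⬝ᵥ (fun k => p k * (F (X i) k - F S k))
      ≤ ∑ k, (-η + p k * Δ k) * (X i k - S k) ^ 2 := fun i => by
    have h := hF (X i) S
    simp only [dotProduct, Pi.sub_apply, Finset.mul_sum] at h ⊢
    calc ∑ k, (X i k - S k) * (p k * (F (X i) k - F S k))
        = ∑ k, (X i k - S k) * (p k * (F (X i) k - Δ k * X i k - F S k + Δ k * S k))
            + ∑ k, p k * Δ k * (X i k - S k) ^ 2 := by
          rw [← Finset.sum_add_distrib]
          exact Finset.sum_congr rfl fun k _ => by ring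
      _ ≤ ∑ k, -η * ((X i k - S k) * (X i k - S k)) + ∑ k, p k * Δ k * (X i k - S k) ^ 2 := by
          gcongr
      _ = ∑ k, (-η + p k * Δ k) * (X i k - S k) ^ 2 := by
          rw [← Finset.sum_add_distrib]
          exact Finset.sum_congr rfl fun k _ => by ring
  have hcoef : ∀ k, -η + p k * (Δ k + c * β) ≤ -(η / pmax) * p k := fun k => by
    have hpos : 0 < pmax := (hp k).trans_le (hpmax k)
    have h1 : η / pmax * p k ≤ η := by
      rw [div_mul_eq_mul_div, div_le_iff₀ hpos]
      exact mul_le_mul_of_nonneg_left (hpmax k) hη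
    nlinarith [mul_nonpos_of_nonneg_of_nonpos (hp k).le (hβ k)]
  calc ∑ i, (X i - S) ⬝ᵥ (fun k => p k * (F (X i) - F S + c • C i) k)
      = ∑ i, (X i - S) ⬝ᵥ (fun k => p k * (F (X i) k - F S k))
          + c * ∑ i, (X i - S) ⬝ᵥ (fun k => p k * C i k) := by
        simp only [dotProduct, Pi.add_apply, Pi.sub_apply, Pi.smul_apply, smul_eq_mul,
          Finset.mul_sum, ← Finset.sum_add_distrib]
        exact Finset.sum_congr rfl fun i _ => Finset.sum_congr rfl fun k _ => by ring
    _ ≤ ∑ i, ∑ k, (-η + p k * Δ k) * (X i k - S k) ^ 2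
          + c * (β * ∑ i, (X i - S) ⬝ᵥ (fun k => p k * (X i - S) k)) :=
        add_le_add (Finset.sum_le_sum fun i _ => hdiss i) (mul_le_mul_of_nonneg_left hC hc)
    _ = ∑ i, ∑ k, (-η + p k * (Δ k + c * β)) * (X i k - S k) ^ 2 := by
        simp only [dotProduct, Pi.sub_apply, Finset.mul_sum, ← Finset.sum_add_distrib]
        exact Finset.sum_congr rfl fun i _ => Finset.sum_congr rfl fun k _ => by ring
    _ ≤ ∑ i, ∑ k, -(η / pmax) * p k * (X i k - S k) ^ 2 :=
        Finset.sum_le_sum fun i _ => Finset.sum_le_sum fun k _ =>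
          mul_le_mul_of_nonneg_right (hcoef k) (sq_nonneg _)
    _ = -(η / pmax) * ∑ i, (X i - S) ⬝ᵥ (fun k => p k * (X i - S) k) := by
        simp only [dotProduct, Pi.sub_apply, Finset.mul_sum]
        exact Finset.sum_congr rfl fun i _ => Finset.sum_congr rfl fun k _ => by ring

theorem le_exp_neg_mul_of_hasDerivAt_le_neg_mul {V V' : ℝ → ℝ} {K t : ℝ}
    (hV : ∀ τ, 0 ≤ τ → HasDerivAt V (V' τ) τ) (hbound : ∀ τ, 0 ≤ τ → V' τ ≤ -K * V τ)
    (ht : 0 ≤ t) :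
    V t ≤ Real.exp (-K * t) * V 0 := by
  have h := le_gronwallBound_of_liminf_deriv_right_le (K := -K) (ε := 0) (b := t)
    (fun τ hτ => (hV τ hτ.1).continuousAt.continuousWithinAt)
    (fun τ hτ r hr => (hV τ hτ.1).hasDerivWithinAt.liminf_right_slope_le hr)
    le_rfl (fun τ hτ => (add_zero (-K * V τ)).symm ▸ hbound τ hτ.1) t ⟨ht, le_rfl⟩
  rwa [gronwallBound_ε0, sub_zero, mul_comm] at h

/-- Theorem 4: global exponential pinning of a nonlinearly coupled network with an
irreducible symmetric coupling matrix via a single controller. -/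
theorem stmt_7 (m n : ℕ) (hm : 2 ≤ m)
    (A : Matrix (Fin m) (Fin m) ℝ) (hsym : A.IsSymm)
    (hoff : ∀ i j : Fin m, i ≠ j → 0 ≤ A i j)
    (hrow : ∀ i : Fin m, ∑ j, A i j = 0)
    (ε c : ℝ) (hε : 0 < ε) (hc : 0 < c)
    (Atil : Matrix (Fin m) (Fin m) ℝ)
    (hAtil : ∀ i j : Fin m, Atil i j =
      if i = (⟨0, by omega⟩ : Fin m) ∧ j = (⟨0, by omega⟩ : Fin m) then A i j - ε else A i j)
    (lam1 : ℝ)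
    (hlam1max : ∀ μ : ℝ, Module.End.HasEigenvalue (Matrix.mulVecLin Atil) μ → μ ≤ lam1)
    (g : ℝ → ℝ) (α : ℝ) (hα : 0 < α)
    (hg : ∀ u v : ℝ, α * (u - v) ^ 2 ≤ (g u - g v) * (u - v))
    (p Δ : Fin n → ℝ) (hp : ∀ k, 0 < p k)
    (η : ℝ) (hη : 0 < η)
    (f : (Fin n → ℝ) → ℝ → (Fin n → ℝ))
    (hcond : ∀ t : ℝ, 0 ≤ t → ∀ x y : Fin n → ℝ,
      (x - y) ⬝ᵥ (fun k => p k * (f x t k - Δ k * x k - f y t k + Δ k * y k))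
        ≤ -η * ((x - y) ⬝ᵥ (x - y)))
    (hΔc : ∀ k : Fin n, Δ k + α * c * lam1 < 0)
    (s : ℝ → Fin n → ℝ) (hs : ∀ t : ℝ, 0 ≤ t → HasDerivAt s (f (s t) t) t)
    (x : Fin m → ℝ → Fin n → ℝ)
    (hx1 : ∀ t : ℝ, 0 ≤ t → HasDerivAt (x ⟨0, by omega⟩)
      (f (x ⟨0, by omega⟩ t) t + c • (∑ j, A ⟨0, by omega⟩ j • (fun k => g (x j t k)))
        - (c * ε) • ((fun k => g (x ⟨0, by omega⟩ t k)) - (fun k => g (s t k)))) t)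
    (hxi : ∀ i : Fin m, i ≠ (⟨0, by omega⟩ : Fin m) → ∀ t : ℝ, 0 ≤ t →
      HasDerivAt (x i) (f (x i t) t + c • (∑ j, A i j • (fun k => g (x j t k)))) t)
    (pmax : ℝ) (hpmax : IsGreatest (Set.range p) pmax)
    (t : ℝ) (ht : 0 ≤ t) :
    ∑ i : Fin m, (x i t - s t) ⬝ᵥ (fun k => p k * (x i t - s t) k)
      ≤ Real.exp (-(2 * η / pmax) * t) *
        ∑ i : Fin m, (x i 0 - s 0) ⬝ᵥ (fun k => p k * (x i 0 - s 0) k) := by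
  set i0 : Fin m := ⟨0, by omega⟩
  obtain rfl : Atil = A - single i0 i0 ε := by
    ext i j
    rw [hAtil, Matrix.sub_apply, single_apply]
    split_ifs <;> grind
  have herr := fun τ hτ i => hasDerivAt_sub_of_pinned_network hrow i0 (F := (f · τ)) (g := g)
    (hs τ hτ) (hx1 τ hτ) (fun i hi => hxi i hi τ hτ) i
  refine le_exp_neg_mul_of_hasDerivAt_le_neg_mul
    (fun τ hτ => hasDerivAt_sum_dotProduct_weighted p (herr τ hτ)) (fun τ hτ => ?_) ht
  have hcoup := sum_dotProduct_pinned_coupling_le hsym hoff hrow hε.le i0 hlam1max hα.le hg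
    (fun k => (hp k).le) (fun j => x j τ) (s τ)
  have hdrift := sum_dotProduct_weighted_drift_le (hcond τ hτ) hη.le hp
    (fun k => hpmax.2 ⟨k, rfl⟩) hc.le (fun k => by linarith [hΔc k]) _ _ _ hcoup
  rw [show -(2 * η / pmax) = 2 * -(η / pmax) by ring, mul_assoc]
  linarith
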